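/- Let A be an n×m matrix over the tropical semiring T, let H be its H-class in M(T), and let Aut(C(A)) be the group of T-semimodule automorphisms of the column space C(A) of A. Then the left Schützenberger group Γ_H is isomorphic to Aut(C(A)); concretely, the map sending φ_X ∈ Γ_H to the automorphism x ↦ X ⊗ x of C(A) is a group isomorphism. -/

import Mathlib

open scoped Classical

/-- The tropical (max-plus) semiring carrier: `ℝ ∪ {-∞}`, where `⊔` is tropical
addition (max) and `+` is tropical multiplication (with `⊥ = -∞` absorbing). -/
abbrev Trop : Type := WithBot ℝ

/-- Tropical matrix multiplication: `(A ⊗ B) i j = max_k (A i k + B k j)`. -/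
def tmul {n m p : ℕ} (A : Fin n → Fin m → Trop) (B : Fin m → Fin p → Trop) :
    Fin n → Fin p → Trop :=
  fun i j => Finset.univ.sup fun k => A i k + B k j

/-- Tropical matrix-vector multiplication (column vector on the right). -/
def tvmul {n m : ℕ} (A : Fin n → Fin m → Trop) (v : Fin m → Trop) : Fin n → Trop :=
  fun i => Finset.univ.sup fun k => A i k + v k

/-- Tropical vector-matrix multiplication (row vector on the left). -/
def vtmul {n m : ℕ} (v : Fin n → Trop) (A : Fin n → Fin m → Trop) : Fin m → Trop :=
  fun j => Finset.univ.sup fun k => v k + A k j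

/-- The tropical identity matrix: `0` on the diagonal, `-∞` elsewhere. -/
def tId (n : ℕ) : Fin n → Fin n → Trop :=
  fun i j => if i = j then ((0 : ℝ) : Trop) else ⊥

/-- A monomial matrix: exactly one entry different from `-∞` in each row and each column. -/
def IsMonomial {n : ℕ} (P : Fin n → Fin n → Trop) : Prop :=
  (∀ i, ∃! j, P i j ≠ ⊥) ∧ (∀ j, ∃! i, P i j ≠ ⊥)

/-- A `T`-subsemimodule of `T^n`: closed under tropical addition (max) and scaling. -/
def IsTropSubmodule {n : ℕ} (S : Set (Fin n → Trop)) : Prop :=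
  (∀ x ∈ S, ∀ y ∈ S, x ⊔ y ∈ S) ∧
  (∀ c : Trop, ∀ x ∈ S, (fun i => c + x i) ∈ S)

/-- The `T`-subsemimodule generated by a set of vectors. -/
def genBy {n : ℕ} (G : Set (Fin n → Trop)) : Set (Fin n → Trop) :=
  ⋂₀ {S | IsTropSubmodule S ∧ G ⊆ S}

/-- The column space of a tropical matrix. -/
def colSpace {n m : ℕ} (A : Fin n → Fin m → Trop) : Set (Fin n → Trop) :=
  genBy {v | ∃ j, v = fun i => A i j}

/-- The row space of a tropical matrix. -/
def rowSpace {n m : ℕ} (A : Fin n → Fin m → Trop) : Set (Fin m → Trop) :=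
  genBy {v | ∃ i, v = fun j => A i j}

/-- The column rank: minimum cardinality of a generating set of the column space. -/
noncomputable def colRank {n m : ℕ} (A : Fin n → Fin m → Trop) : ℕ :=
  sInf {k | ∃ G : Finset (Fin n → Trop), G.card = k ∧ genBy (↑G) = colSpace A}

/-- The row rank: minimum cardinality of a generating set of the row space. -/
noncomputable def rowRank {n m : ℕ} (A : Fin n → Fin m → Trop) : ℕ :=
  sInf {k | ∃ G : Finset (Fin m → Trop), G.card = k ∧ genBy (↑G) = rowSpace A}

/-- Isomorphism of tropical subsemimodules (given by a bijection preserving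
tropical addition and scaling). -/
def TropIso {n m : ℕ} (S : Set (Fin n → Trop)) (S' : Set (Fin m → Trop)) : Prop :=
  ∃ f : (Fin n → Trop) → (Fin m → Trop),
    Set.BijOn f S S' ∧
    (∀ x ∈ S, ∀ y ∈ S, f (x ⊔ y) = f x ⊔ f y) ∧
    (∀ c : Trop, ∀ x ∈ S, f (fun i => c + x i) = fun i => c + f x i)

/-- The `H`-class of a matrix `A` in `M(T)` (among matrices of the same shape),
characterised by equality of column and row spaces. -/
def HSet {n m : ℕ} (A : Fin n → Fin m → Trop) : Set (Fin n → Fin m → Trop) :=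
  {B | colSpace B = colSpace A ∧ rowSpace B = rowSpace A}

/-- Adjacency of the coloured bipartite graph `B_A` of a tropical matrix. -/
def BAdj {r c : ℕ} (A : Fin r → Fin c → Trop) :
    (Fin r ⊕ Fin c) → (Fin r ⊕ Fin c) → Prop
  | Sum.inl i, Sum.inr j => A i j ≠ ⊥
  | Sum.inr j, Sum.inl i => A i j ≠ ⊥
  | _, _ => False

/-- Connectedness of the bipartite graph `B_A`. -/
def BConnected {r c : ℕ} (A : Fin r → Fin c → Trop) : Prop :=
  ∀ x y : Fin r ⊕ Fin c, Relation.ReflTransGen (BAdj A) x y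

/-- `lam` is a tropical eigenvalue of `P`. -/
def IsEig {n : ℕ} (P : Fin n → Fin n → Trop) (lam : Trop) : Prop :=
  ∃ v : Fin n → Trop, v ≠ (fun _ => ⊥) ∧ tvmul P v = fun i => lam + v i

/-- The group `G_A` of monomial matrices `P` with `C(PA) = C(A)`. -/
def GA {r c : ℕ} (A : Fin r → Fin c → Trop) : Set (Fin r → Fin r → Trop) :=
  {P | IsMonomial P ∧ colSpace (tmul P A) = colSpace A}

/-- The dual group `{}_AG` of monomial matrices `Q` with `R(AQ) = R(A)`. -/
def AGr {r c : ℕ} (A : Fin r → Fin c → Trop) : Set (Fin c → Fin c → Trop) :=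
  {Q | IsMonomial Q ∧ rowSpace (tmul A Q) = rowSpace A}

/-- The left Schützenberger group of the `H`-class of `A`: maps `H → H` given by left
multiplication by some matrix `X`. -/
def Schutz {n m : ℕ} (A : Fin n → Fin m → Trop) : Set (HSet A → HSet A) :=
  {φ | ∃ X : Fin n → Fin n → Trop, ∀ B : HSet A, (φ B).1 = tmul X B.1}

/-- The group of `T`-semimodule automorphisms of the column space `C(A)`, as bijections
of the subtype `↥(colSpace A)` preserving tropical addition and scaling. -/
def AutSet {n m : ℕ} (A : Fin n → Fin m → Trop) : Set (colSpace A → colSpace A) :=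
  {f | Function.Bijective f ∧
    (∀ x y : colSpace A, ∀ h : (x.1 ⊔ y.1) ∈ colSpace A,
      (f ⟨x.1 ⊔ y.1, h⟩).1 = (f x).1 ⊔ (f y).1) ∧
    (∀ c : Trop, ∀ x : colSpace A, ∀ h : (fun i => c + x.1 i) ∈ colSpace A,
      (f ⟨fun i => c + x.1 i, h⟩).1 = fun i => c + (f x).1 i)}

/-!
For `X` with `X ⊗ A ∈ H`, the map `x ↦ X ⊗ x` sends `C(A)` onto `C(X ⊗ A) = C(A)`, and
`R(X ⊗ A) = R(A)` gives a matrix `Y` with `Y ⊗ X ⊗ A = A`, i.e. a left inverse on `C(A)`.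
A linear map on `C(A)` is determined by its values on the columns of `A`, so this automorphism
depends only on `φ_X`, and `φ_X ↦ (x ↦ X ⊗ x)` is an injective homomorphism `Γ_H → Aut(C(A))`.

Surjectivity rests on the fact that every linear functional `ψ` on `C(A)` is `y ⊗ -` for a row
vector `y`. For this it suffices that every column `A_j` with `ψ(A_j)` finite has a row `k` with
`ψ(A_j) + A_kj' ≤ ψ(A_j') + A_kj` for all `j'`. Otherwise some combination `w` of columns with
`ψ(w) ≤ ψ(A_j)` exceeds `A_j` in every finite coordinate, which forces `ψ(w) > ψ(A_j)`.
So an automorphism and its inverse are realised by matrices `X` and `Y`; then `X ⊗ B` and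
`Y ⊗ X ⊗ B = B` have the same row space for every `B ∈ H`, hence `X` stabilises `H`.
-/

namespace Trop

theorem add_finset_sup {ι : Type*} (s : Finset ι) (a : Trop) (f : ι → Trop) :
    a + s.sup f = s.sup fun i => a + f i :=
  Finset.apply_sup_eq_sup_comp (a + ·) (fun x y => add_max a x y) (WithBot.add_bot a)

theorem finset_sup_add {ι : Type*} (s : Finset ι) (f : ι → Trop) (a : Trop) :
    s.sup f + a = s.sup fun i => f i + a :=
  Finset.apply_sup_eq_sup_comp (· + a) (fun x y => max_add x y a) (WithBot.bot_add a)

theorem exists_add_eq {a : Trop} (ha : a ≠ ⊥) (b : Trop) : ∃ r, r + a = b := by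
  lift a to ℝ using ha
  induction b using WithBot.recBotCoe with
  | bot => exact ⟨⊥, WithBot.bot_add _⟩
  | coe b => exact ⟨↑(b - a), by norm_cast; ring⟩

theorem exists_add_le_and_lt {β β' a a' : Trop} (ha : a ≠ ⊥) (h : β' + a < β + a') :
    ∃ c, c + β' ≤ β ∧ a < c + a' := by
  have hβ : β ≠ ⊥ := by rintro rfl; simp at h
  have ha' : a' ≠ ⊥ := by rintro rfl; simp at h
  lift a to ℝ using ha
  lift β to ℝ using hβ
  lift a' to ℝ using ha'
  induction β' using WithBot.recBotCoe with
  | bot => exact ⟨↑(a - a' + 1), by simp, by norm_cast; linarith⟩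
  | coe β' =>
    norm_cast at h
    exact ⟨↑(β - β'), by norm_cast; linarith, by norm_cast; linarith⟩

theorem exists_pos_add_le {ι : Type*} [Finite ι] {u x : ι → Trop}
    (h : ∀ k, u k ≠ ⊥ → u k < x k) : ∃ ε : ℝ, 0 < ε ∧ ∀ k, (ε : Trop) + u k ≤ x k := by
  have hev : ∀ k, ∀ᶠ ε : ℝ in nhdsWithin 0 (Set.Ioi 0), (ε : Trop) + u k ≤ x k := by
    intro k
    by_cases hk : u k = ⊥
    · exact Filter.Eventually.of_forall fun ε => by simp [hk]
    · have hlt := h k hk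
      obtain ⟨a, ha⟩ := WithBot.ne_bot_iff_exists.mp hk
      obtain ⟨b, hb⟩ := WithBot.ne_bot_iff_exists.mp (ne_bot_of_gt hlt)
      rw [← ha, ← hb, WithBot.coe_lt_coe] at hlt
      filter_upwards [Ioo_mem_nhdsGT (sub_pos.2 hlt)] with ε hε
      rw [← ha, ← hb]
      norm_cast
      linarith [hε.2]
  obtain ⟨ε, hε, hpos⟩ := ((Filter.eventually_all.2 hev).and self_mem_nhdsWithin).exists
  exact ⟨ε, hpos, hε⟩

theorem lt_coe_add_self {b : Trop} (hb : b ≠ ⊥) {ε : ℝ} (hε : 0 < ε) : b < ε + b := by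
  lift b to ℝ using hb
  norm_cast
  linarith

end Trop

section MatrixProducts

variable {n m p : ℕ}

theorem tvmul_sup (X : Fin n → Fin m → Trop) (x y : Fin m → Trop) :
    tvmul X (x ⊔ y) = tvmul X x ⊔ tvmul X y := by
  funext i
  simp only [tvmul, Pi.sup_apply, add_max]
  exact Finset.sup_sup

theorem tvmul_smul (X : Fin n → Fin m → Trop) (c : Trop) (x : Fin m → Trop) :
    tvmul X (fun k => c + x k) = fun i => c + tvmul X x i := by
  funext i
  simp only [tvmul, Trop.add_finset_sup, add_left_comm]

theorem tvmul_tmul (X : Fin n → Fin m → Trop) (Y : Fin m → Fin p → Trop) (x : Fin p → Trop) :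
    tvmul (tmul X Y) x = tvmul X (tvmul Y x) := by
  funext i
  simp only [tvmul, tmul, Trop.finset_sup_add, Trop.add_finset_sup, add_assoc]
  exact Finset.sup_comm _ _ _

theorem tmul_assoc {q : ℕ} (X : Fin n → Fin m → Trop) (Y : Fin m → Fin p → Trop)
    (Z : Fin p → Fin q → Trop) : tmul (tmul X Y) Z = tmul X (tmul Y Z) :=
  funext fun i => funext fun j => congrFun (tvmul_tmul X Y fun k => Z k j) i

theorem vtmul_sup (x y : Fin n → Trop) (M : Fin n → Fin m → Trop) :
    vtmul (x ⊔ y) M = vtmul x M ⊔ vtmul y M := by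
  funext j
  simp only [vtmul, Pi.sup_apply, max_add]
  exact Finset.sup_sup

theorem vtmul_smul (c : Trop) (x : Fin n → Trop) (M : Fin n → Fin m → Trop) :
    vtmul (fun k => c + x k) M = fun j => c + vtmul x M j := by
  funext j
  simp only [vtmul, Trop.add_finset_sup, add_assoc]

theorem vtmul_finset_sup {ι : Type*} (s : Finset ι) (z : ι → Fin n → Trop)
    (M : Fin n → Fin m → Trop) (j : Fin m) :
    vtmul (s.sup z) M j = s.sup fun l => vtmul (z l) M j := by
  simp only [vtmul, Finset.sup_apply, Trop.finset_sup_add]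
  exact Finset.sup_comm _ _ _

theorem vtmul_bot (M : Fin n → Fin m → Trop) : vtmul ⊥ M = ⊥ := by
  funext j
  simp [vtmul]

theorem vtmul_ite_eq (k : Fin n) (r : Trop) (M : Fin n → Fin m → Trop) (j : Fin m) :
    vtmul (fun k' => if k' = k then r else ⊥) M j = r + M k j := by
  unfold vtmul
  refine le_antisymm (Finset.sup_le fun k' _ => ?_) ?_
  · dsimp only
    split_ifs with h
    · rw [h]
    · simp
  · simpa using Finset.le_sup (f := fun k' => (if k' = k then r else ⊥) + M k' j)
      (Finset.mem_univ k)

end MatrixProducts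

section Spans

variable {n m : ℕ}

theorem subset_genBy (G : Set (Fin n → Trop)) : G ⊆ genBy G :=
  fun _ hx _ hS => hS.2 hx

theorem genBy_subset {G S : Set (Fin n → Trop)} (hS : IsTropSubmodule S) (h : G ⊆ S) :
    genBy G ⊆ S :=
  fun _ hx => hx S ⟨hS, h⟩

theorem isTropSubmodule_genBy (G : Set (Fin n → Trop)) : IsTropSubmodule (genBy G) :=
  ⟨fun x hx y hy S hS => hS.1.1 x (hx S hS) y (hy S hS),
    fun c x hx S hS => hS.1.2 c x (hx S hS)⟩

theorem genBy_induction {G : Set (Fin n → Trop)} {P : (Fin n → Trop) → Prop}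
    (mem : ∀ g ∈ G, P g)
    (sup : ∀ x y, x ∈ genBy G → y ∈ genBy G → P x → P y → P (x ⊔ y))
    (smul : ∀ c x, x ∈ genBy G → P x → P fun i => c + x i)
    {x : Fin n → Trop} (hx : x ∈ genBy G) : P x :=
  (genBy_subset (S := {x | x ∈ genBy G ∧ P x})
    ⟨fun x hx y hy => ⟨(isTropSubmodule_genBy G).1 x hx.1 y hy.1, sup x y hx.1 hy.1 hx.2 hy.2⟩,
      fun c x hx => ⟨(isTropSubmodule_genBy G).2 c x hx.1, smul c x hx.1 hx.2⟩⟩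
    (fun g hg => ⟨subset_genBy G hg, mem g hg⟩) hx).2

theorem isTropSubmodule_colSpace (A : Fin n → Fin m → Trop) : IsTropSubmodule (colSpace A) :=
  isTropSubmodule_genBy _

theorem col_mem_colSpace (A : Fin n → Fin m → Trop) (j : Fin m) :
    (fun i => A i j) ∈ colSpace A :=
  subset_genBy _ ⟨j, rfl⟩

theorem row_mem_rowSpace (A : Fin n → Fin m → Trop) (i : Fin n) :
    (fun j => A i j) ∈ rowSpace A :=
  subset_genBy _ ⟨i, rfl⟩

theorem IsTropSubmodule.image_tvmul {p : ℕ} {S : Set (Fin n → Trop)} (hS : IsTropSubmodule S)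
    (X : Fin p → Fin n → Trop) : IsTropSubmodule (tvmul X '' S) :=
  ⟨by rintro _ ⟨x, hx, rfl⟩ _ ⟨y, hy, rfl⟩; exact ⟨x ⊔ y, hS.1 x hx y hy, tvmul_sup X x y⟩,
    by rintro c _ ⟨x, hx, rfl⟩; exact ⟨_, hS.2 c x hx, tvmul_smul X c x⟩⟩

theorem colSpace_tmul {p : ℕ} (X : Fin p → Fin n → Trop) (A : Fin n → Fin m → Trop) :
    colSpace (tmul X A) = tvmul X '' colSpace A := by
  refine (genBy_subset ((isTropSubmodule_colSpace A).image_tvmul X) ?_).antisymm ?_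
  · rintro _ ⟨j, rfl⟩
    exact ⟨_, col_mem_colSpace A j, rfl⟩
  · rintro _ ⟨x, hx, rfl⟩
    have hS := isTropSubmodule_colSpace (tmul X A)
    refine genBy_induction (P := fun x => tvmul X x ∈ colSpace (tmul X A)) ?_ ?_ ?_ hx
    · rintro _ ⟨j, rfl⟩
      exact col_mem_colSpace (tmul X A) j
    · intro x y _ _ hx hy
      rw [tvmul_sup]
      exact hS.1 _ hx _ hy
    · intro c x _ hx
      rw [tvmul_smul]
      exact hS.2 c _ hx

theorem vtmul_mem_rowSpace (M : Fin n → Fin m → Trop) (z : Fin n → Trop) (i : Fin n) :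
    vtmul z M ∈ rowSpace M := by
  have hS := isTropSubmodule_genBy {v | ∃ i, v = fun j => M i j}
  have hz : vtmul z M = Finset.univ.sup fun k j => z k + M k j := by
    funext j
    rw [Finset.sup_apply]
    rfl
  rw [hz]
  refine Finset.sup_induction ?_ (fun x hx y hy => hS.1 x hx y hy)
    fun k _ => hS.2 (z k) _ (row_mem_rowSpace M k)
  have hbot : (⊥ : Fin m → Trop) = fun j => ⊥ + M i j := by
    funext j
    simp
  rw [hbot]
  exact hS.2 ⊥ _ (row_mem_rowSpace M i)

theorem rowSpace_subset_range_vtmul (M : Fin n → Fin m → Trop) :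
    rowSpace M ⊆ Set.range fun z => vtmul z M := by
  refine genBy_subset ⟨?_, ?_⟩ ?_
  · rintro _ ⟨x, rfl⟩ _ ⟨y, rfl⟩
    exact ⟨x ⊔ y, vtmul_sup x y M⟩
  · rintro c _ ⟨x, rfl⟩
    exact ⟨_, vtmul_smul c x M⟩
  · rintro _ ⟨i, rfl⟩
    refine ⟨fun k => if k = i then ((0 : ℝ) : Trop) else ⊥, funext fun j => ?_⟩
    show vtmul _ M j = M i j
    rw [vtmul_ite_eq]
    exact zero_add _

theorem rowSpace_tmul_subset (Y : Fin n → Fin n → Trop) (M : Fin n → Fin m → Trop) :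
    rowSpace (tmul Y M) ⊆ rowSpace M :=
  genBy_subset (isTropSubmodule_genBy _) (by rintro _ ⟨i, rfl⟩; exact vtmul_mem_rowSpace M (Y i) i)

theorem exists_tmul_eq_of_rowSpace_subset {p : ℕ} {A : Fin p → Fin m → Trop}
    {M : Fin n → Fin m → Trop} (h : rowSpace A ⊆ rowSpace M) : ∃ Y, tmul Y M = A := by
  choose Y hY using fun i => rowSpace_subset_range_vtmul M (h (row_mem_rowSpace A i))
  exact ⟨Y, funext hY⟩

end Spans

section LinearMaps

variable {n m p : ℕ}

def IsTropFunctionalOn (S : Set (Fin n → Trop)) (ψ : (Fin n → Trop) → Trop) : Prop :=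
  (∀ x ∈ S, ∀ y ∈ S, ψ (x ⊔ y) = ψ x ⊔ ψ y) ∧
  ∀ c : Trop, ∀ x ∈ S, ψ (fun i => c + x i) = c + ψ x

def IsTropLinearOn (S : Set (Fin n → Trop)) (F : (Fin n → Trop) → (Fin p → Trop)) : Prop :=
  ∀ i, IsTropFunctionalOn S fun x => F x i

theorem isTropLinearOn_iff {S : Set (Fin n → Trop)} {F : (Fin n → Trop) → (Fin p → Trop)} :
    IsTropLinearOn S F ↔ (∀ x ∈ S, ∀ y ∈ S, F (x ⊔ y) = F x ⊔ F y) ∧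
      ∀ c : Trop, ∀ x ∈ S, F (fun i => c + x i) = fun i => c + F x i :=
  ⟨fun hF => ⟨fun x hx y hy => funext fun i => (hF i).1 x hx y hy,
      fun c x hx => funext fun i => (hF i).2 c x hx⟩,
    fun hF i => ⟨fun x hx y hy => congrFun (hF.1 x hx y hy) i,
      fun c x hx => congrFun (hF.2 c x hx) i⟩⟩

theorem IsTropLinearOn.map_sup {S : Set (Fin n → Trop)} {F : (Fin n → Trop) → (Fin p → Trop)}
    (hF : IsTropLinearOn S F) {x y : Fin n → Trop} (hx : x ∈ S) (hy : y ∈ S) :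
    F (x ⊔ y) = F x ⊔ F y :=
  (isTropLinearOn_iff.1 hF).1 x hx y hy

theorem IsTropLinearOn.map_smul {S : Set (Fin n → Trop)} {F : (Fin n → Trop) → (Fin p → Trop)}
    (hF : IsTropLinearOn S F) (c : Trop) {x : Fin n → Trop} (hx : x ∈ S) :
    F (fun i => c + x i) = fun i => c + F x i :=
  (isTropLinearOn_iff.1 hF).2 c x hx

theorem isTropLinearOn_tvmul (X : Fin p → Fin n → Trop) (S : Set (Fin n → Trop)) :
    IsTropLinearOn S (tvmul X) :=
  isTropLinearOn_iff.2 ⟨fun x _ y _ => tvmul_sup X x y, fun c x _ => tvmul_smul X c x⟩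

theorem isTropLinearOn_id (S : Set (Fin n → Trop)) : IsTropLinearOn S id :=
  isTropLinearOn_iff.2 ⟨fun _ _ _ _ => rfl, fun _ _ _ => rfl⟩

theorem IsTropFunctionalOn.eqOn_colSpace {A : Fin n → Fin m → Trop}
    {ψ χ : (Fin n → Trop) → Trop} (hψ : IsTropFunctionalOn (colSpace A) ψ)
    (hχ : IsTropFunctionalOn (colSpace A) χ) (h : ∀ j, ψ (fun i => A i j) = χ (fun i => A i j)) :
    Set.EqOn ψ χ (colSpace A) := fun _ hx =>
  genBy_induction (P := fun x => ψ x = χ x) (by rintro _ ⟨j, rfl⟩; exact h j)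
    (fun x y hx hy ex ey => by rw [hψ.1 x hx y hy, hχ.1 x hx y hy, ex, ey])
    (fun c x hx ex => by rw [hψ.2 c x hx, hχ.2 c x hx, ex]) hx

theorem IsTropLinearOn.eqOn_colSpace {A : Fin n → Fin m → Trop}
    {F G : (Fin n → Trop) → (Fin p → Trop)} (hF : IsTropLinearOn (colSpace A) F)
    (hG : IsTropLinearOn (colSpace A) G) (h : ∀ j, F (fun i => A i j) = G (fun i => A i j)) :
    Set.EqOn F G (colSpace A) := fun _ hx =>
  funext fun i => (hF i).eqOn_colSpace (hG i) (fun j => congrFun (h j) i) hx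

theorem eqOn_tvmul_of_tmul_eq {A : Fin n → Fin m → Trop} {X X' : Fin p → Fin n → Trop}
    (h : tmul X A = tmul X' A) : Set.EqOn (tvmul X) (tvmul X') (colSpace A) :=
  (isTropLinearOn_tvmul X _).eqOn_colSpace (isTropLinearOn_tvmul X' _)
    fun j => funext fun i => congrFun (congrFun h i) j

theorem IsTropFunctionalOn.apply_le_apply {S : Set (Fin n → Trop)} {ψ : (Fin n → Trop) → Trop}
    (hψ : IsTropFunctionalOn S ψ) {x y : Fin n → Trop} (hx : x ∈ S) (hy : y ∈ S) (h : x ≤ y) :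
    ψ x ≤ ψ y :=
  calc ψ x ≤ ψ x ⊔ ψ y := le_sup_left
    _ = ψ y := by rw [← hψ.1 x hx y hy, sup_eq_right.2 h]

theorem IsTropFunctionalOn.apply_lt_apply {S : Set (Fin n → Trop)} {ψ : (Fin n → Trop) → Trop}
    (hS : IsTropSubmodule S) (hψ : IsTropFunctionalOn S ψ) {u x : Fin n → Trop} (hu : u ∈ S)
    (hx : x ∈ S) (hlt : ∀ k, u k ≠ ⊥ → u k < x k) (hψu : ψ u ≠ ⊥) : ψ u < ψ x := by
  obtain ⟨ε, hε, hle⟩ := Trop.exists_pos_add_le hlt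
  calc ψ u < ε + ψ u := Trop.lt_coe_add_self hψu hε
    _ = ψ (fun k => ε + u k) := (hψ.2 _ u hu).symm
    _ ≤ ψ x := hψ.apply_le_apply (hS.2 _ u hu) hx hle

theorem IsTropFunctionalOn.exists_dominated_row {A : Fin n → Fin m → Trop}
    {ψ : (Fin n → Trop) → Trop} (hψ : IsTropFunctionalOn (colSpace A) ψ) {j : Fin m}
    (hj : ψ (fun i => A i j) ≠ ⊥) :
    ∃ k, A k j ≠ ⊥ ∧ ∀ j', ψ (fun i => A i j) + A k j' ≤ ψ (fun i => A i j') + A k j := by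
  by_contra! hcon
  have hS := isTropSubmodule_colSpace A
  have hwit : ∀ k, ∃ (c : Trop) (j' : Fin m),
      c + ψ (fun i => A i j') ≤ ψ (fun i => A i j) ∧ (A k j ≠ ⊥ → A k j < c + A k j') := by
    intro k
    by_cases hk : A k j = ⊥
    · exact ⟨⊥, j, by simp, fun h => (h hk).elim⟩
    · obtain ⟨j', hj'⟩ := hcon k hk
      obtain ⟨c, hc, hlt⟩ := Trop.exists_add_le_and_lt hk hj'
      exact ⟨c, j', hc, fun _ => hlt⟩
  choose c j' hc using hwit
  obtain ⟨w, hw_def⟩ : ∃ w : Fin n → Trop, w = Finset.univ.sup fun k i => c k + A i (j' k) :=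
    ⟨_, rfl⟩
  have hw : w ∈ colSpace A ∧ ψ w ≤ ψ (fun i => A i j) := by
    rw [hw_def]
    refine Finset.sup_induction (p := fun w => w ∈ colSpace A ∧ ψ w ≤ ψ fun i => A i j)
      ?_ ?_ fun k _ => ?_
    · have hbot : (⊥ : Fin n → Trop) = fun i => ⊥ + A i j := by
        funext i
        simp
      rw [hbot, hψ.2 ⊥ _ (col_mem_colSpace A j)]
      exact ⟨hS.2 ⊥ _ (col_mem_colSpace A j), by simp⟩
    · rintro x ⟨hx, hψx⟩ y ⟨hy, hψy⟩
      exact ⟨hS.1 x hx y hy, by rw [hψ.1 x hx y hy]; exact sup_le hψx hψy⟩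
    · rw [hψ.2 (c k) _ (col_mem_colSpace A (j' k))]
      exact ⟨hS.2 (c k) _ (col_mem_colSpace A (j' k)), (hc k).1⟩
  have hlt : ∀ k, A k j ≠ ⊥ → A k j < w k := fun k hk =>
    ((hc k).2 hk).trans_le (by
      rw [hw_def, Finset.sup_apply]
      exact Finset.le_sup (f := fun k' => c k' + A k (j' k')) (Finset.mem_univ k))
  exact (hψ.apply_lt_apply hS (col_mem_colSpace A j) hw.1 hlt hj).not_ge hw.2

theorem IsTropFunctionalOn.exists_vtmul_le_and_eq {A : Fin n → Fin m → Trop}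
    {ψ : (Fin n → Trop) → Trop} (hψ : IsTropFunctionalOn (colSpace A) ψ) (j : Fin m) :
    ∃ z, (∀ j', vtmul z A j' ≤ ψ (fun i => A i j')) ∧ vtmul z A j = ψ (fun i => A i j) := by
  by_cases hj : ψ (fun i => A i j) = ⊥
  · exact ⟨⊥, fun j' => by simp [vtmul_bot], by simp [vtmul_bot, hj]⟩
  obtain ⟨k, hk, hdom⟩ := hψ.exists_dominated_row hj
  obtain ⟨r, hr⟩ := Trop.exists_add_eq hk (ψ fun i => A i j)
  refine ⟨fun k' => if k' = k then r else ⊥, fun j' => ?_, by rw [vtmul_ite_eq, hr]⟩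
  rw [vtmul_ite_eq, ← WithBot.add_le_add_iff_right hk, add_right_comm, hr]
  exact hdom j'

theorem IsTropFunctionalOn.exists_vtmul_eq {A : Fin n → Fin m → Trop}
    {ψ : (Fin n → Trop) → Trop} (hψ : IsTropFunctionalOn (colSpace A) ψ) :
    ∃ y, ∀ j, vtmul y A j = ψ (fun i => A i j) := by
  choose z hz using hψ.exists_vtmul_le_and_eq
  refine ⟨Finset.univ.sup z, fun j => ?_⟩
  rw [vtmul_finset_sup]
  refine le_antisymm (Finset.sup_le fun j' _ => (hz j').1 j) ?_
  rw [← (hz j).2]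
  exact Finset.le_sup (f := fun j' => vtmul (z j') A j) (Finset.mem_univ j)

theorem IsTropLinearOn.exists_tvmul_eqOn {A : Fin n → Fin m → Trop}
    {F : (Fin n → Trop) → (Fin p → Trop)} (hF : IsTropLinearOn (colSpace A) F) :
    ∃ X, Set.EqOn (tvmul X) F (colSpace A) := by
  choose X hX using fun i => (hF i).exists_vtmul_eq
  exact ⟨X, (isTropLinearOn_tvmul X _).eqOn_colSpace hF fun j => funext fun i => hX i j⟩

theorem IsTropLinearOn.invFunOn {S : Set (Fin n → Trop)} {T : Set (Fin p → Trop)}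
    {F : (Fin n → Trop) → (Fin p → Trop)}
    (hS : IsTropSubmodule S) (hT : IsTropSubmodule T) (hF : IsTropLinearOn S F)
    (h : Set.BijOn F S T) : IsTropLinearOn T (Function.invFunOn F S) := by
  set G := Function.invFunOn F S
  have hG : Set.MapsTo G T S := h.surjOn.mapsTo_invFunOn
  have hFG : Set.RightInvOn G F T := h.surjOn.rightInvOn_invFunOn
  refine isTropLinearOn_iff.2 ⟨fun x hx y hy => ?_, fun c x hx => ?_⟩
  · refine h.injOn (hG (hT.1 x hx y hy)) (hS.1 _ (hG hx) _ (hG hy)) ?_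
    rw [hFG (hT.1 x hx y hy), hF.map_sup (hG hx) (hG hy), hFG hx, hFG hy]
  · refine h.injOn (hG (hT.2 c x hx)) (hS.2 c _ (hG hx)) ?_
    rw [hFG (hT.2 c x hx), hF.map_smul c (hG hx), hFG hx]

theorem IsTropLinearOn.rowSpace_subset {A B : Fin n → Fin m → Trop}
    {F : (Fin n → Trop) → (Fin n → Trop)} (hF : IsTropLinearOn (colSpace A) F)
    (hcol : ∀ j, F (fun i => A i j) = fun i => B i j) : rowSpace B ⊆ rowSpace A := by
  obtain ⟨X, hX⟩ := hF.exists_tvmul_eqOn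
  have hXA : tmul X A = B :=
    funext fun i => funext fun j => congrFun ((hX (col_mem_colSpace A j)).trans (hcol j)) i
  exact hXA ▸ rowSpace_tmul_subset X A

theorem rowSpace_eq_of_bijOn {A B : Fin n → Fin m → Trop} {F : (Fin n → Trop) → (Fin n → Trop)}
    (hF : IsTropLinearOn (colSpace A) F) (h : Set.BijOn F (colSpace A) (colSpace B))
    (hcol : ∀ j, F (fun i => A i j) = fun i => B i j) : rowSpace A = rowSpace B := by
  have hG := hF.invFunOn (isTropSubmodule_colSpace A) (isTropSubmodule_colSpace B) h
  refine (hG.rowSpace_subset fun j => ?_).antisymm (hF.rowSpace_subset hcol)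
  rw [← hcol j]
  exact h.invOn_invFunOn.1 (col_mem_colSpace A j)

end LinearMaps

section Schutzenberger

variable {n m : ℕ}

theorem mem_HSet_self (A : Fin n → Fin m → Trop) : A ∈ HSet A := ⟨rfl, rfl⟩

theorem bijOn_tvmul_of_tmul_mem_HSet {A : Fin n → Fin m → Trop} {X : Fin n → Fin n → Trop}
    (hX : tmul X A ∈ HSet A) : Set.BijOn (tvmul X) (colSpace A) (colSpace A) := by
  obtain ⟨Y, hY⟩ := exists_tmul_eq_of_rowSpace_subset hX.2.ge
  have hYX : Set.EqOn (tvmul (tmul Y X)) id (colSpace A) :=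
    (isTropLinearOn_tvmul _ _).eqOn_colSpace (isTropLinearOn_id _) fun j => by
      show (fun i => tmul (tmul Y X) A i j) = fun i => A i j
      rw [tmul_assoc, hY]
  have hinj : Set.InjOn (tvmul X) (colSpace A) :=
    Set.LeftInvOn.injOn (f₁' := tvmul Y) fun x hx => by rw [← tvmul_tmul]; exact hYX hx
  have h := hinj.bijOn_image
  rwa [← colSpace_tmul, hX.1] at h

theorem tmul_mem_HSet_of_bijOn {A B : Fin n → Fin m → Trop} {X : Fin n → Fin n → Trop}
    (hX : Set.BijOn (tvmul X) (colSpace A) (colSpace A)) (hB : B ∈ HSet A) :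
    tmul X B ∈ HSet A := by
  have hcol : colSpace (tmul X B) = colSpace A := by rw [colSpace_tmul, hB.1, hX.image_eq]
  have hXB : Set.BijOn (tvmul X) (colSpace B) (colSpace (tmul X B)) := by rwa [hB.1, hcol]
  refine ⟨hcol, ?_⟩
  rw [← hB.2]
  exact (rowSpace_eq_of_bijOn (isTropLinearOn_tvmul X _) hXB fun _ => rfl).symm

theorem tmul_eq_tmul_of_eqOn {A B : Fin n → Fin m → Trop} {X X' : Fin n → Fin n → Trop}
    (h : Set.EqOn (tvmul X) (tvmul X') (colSpace A)) (hB : colSpace B = colSpace A) :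
    tmul X B = tmul X' B :=
  funext fun i => funext fun j => congrFun (h (hB ▸ col_mem_colSpace B j)) i

theorem exists_tvmul_of_mem_AutSet {A : Fin n → Fin m → Trop} {f : colSpace A → colSpace A}
    (hf : f ∈ AutSet A) : ∃ X : Fin n → Fin n → Trop, ∀ x, (f x).1 = tvmul X x.1 := by
  set F := Function.extend Subtype.val (fun x => (f x).1) id
  have hF : ∀ x (hx : x ∈ colSpace A), F x = (f ⟨x, hx⟩).1 := fun x hx =>
    Subtype.val_injective.extend_apply _ _ ⟨x, hx⟩
  have hS := isTropSubmodule_colSpace A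
  have hlin : IsTropLinearOn (colSpace A) F := isTropLinearOn_iff.2
    ⟨fun x hx y hy => by rw [hF _ (hS.1 x hx y hy), hF x hx, hF y hy, hf.2.1 ⟨x, hx⟩ ⟨y, hy⟩],
     fun c x hx => by rw [hF _ (hS.2 c x hx), hF x hx, hf.2.2 c ⟨x, hx⟩]⟩
  obtain ⟨X, hX⟩ := hlin.exists_tvmul_eqOn
  exact ⟨X, fun x => (hF x.1 x.2).symm.trans (hX x.2).symm⟩

theorem bijOn_tvmul_of_mem_AutSet {A : Fin n → Fin m → Trop} {f : colSpace A → colSpace A}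
    (hf : f ∈ AutSet A) {X : Fin n → Fin n → Trop} (hX : ∀ x, (f x).1 = tvmul X x.1) :
    Set.BijOn (tvmul X) (colSpace A) (colSpace A) := by
  have hmaps : Set.MapsTo (tvmul X) (colSpace A) (colSpace A) := fun x hx =>
    hX ⟨x, hx⟩ ▸ (f ⟨x, hx⟩).2
  have hf' : f = hmaps.restrict := funext fun x => Subtype.ext (hX x)
  rw [hf'] at hf
  exact ⟨hmaps, hmaps.restrict_inj.1 hf.1.1, hmaps.restrict_surjective_iff.1 hf.1.2⟩

theorem restrict_tvmul_mem_AutSet {A : Fin n → Fin m → Trop} {X : Fin n → Fin n → Trop}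
    (h : Set.BijOn (tvmul X) (colSpace A) (colSpace A)) : h.mapsTo.restrict ∈ AutSet A :=
  ⟨h.bijective, fun x y _ => tvmul_sup X x.1 y.1, fun c x _ => tvmul_smul X c x.1⟩

theorem tmul_mem_HSet_of_mem_Schutz {A : Fin n → Fin m → Trop} {φ : HSet A → HSet A}
    {X : Fin n → Fin n → Trop} (hX : ∀ B : HSet A, (φ B).1 = tmul X B.1) : tmul X A ∈ HSet A :=
  hX ⟨A, mem_HSet_self A⟩ ▸ (φ ⟨A, mem_HSet_self A⟩).2

noncomputable def schutzToAut (A : Fin n → Fin m → Trop) (φ : Schutz A) : AutSet A :=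
  ⟨_, restrict_tvmul_mem_AutSet
    (bijOn_tvmul_of_tmul_mem_HSet (tmul_mem_HSet_of_mem_Schutz φ.2.choose_spec))⟩

theorem schutzToAut_apply {A : Fin n → Fin m → Trop} (φ : Schutz A) {X : Fin n → Fin n → Trop}
    (hX : ∀ B : HSet A, (φ.1 B).1 = tmul X B.1) (x : colSpace A) :
    ((schutzToAut A φ).1 x).1 = tvmul X x.1 :=
  eqOn_tvmul_of_tmul_eq (by rw [← φ.2.choose_spec ⟨A, mem_HSet_self A⟩, hX]) x.2

theorem schutzToAut_injective (A : Fin n → Fin m → Trop) : Function.Injective (schutzToAut A) := by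
  rintro φ ψ h
  obtain ⟨X, hX⟩ := φ.2
  obtain ⟨Y, hY⟩ := ψ.2
  have hXY : Set.EqOn (tvmul X) (tvmul Y) (colSpace A) := fun x hx => by
    rw [← schutzToAut_apply φ hX ⟨x, hx⟩, ← schutzToAut_apply ψ hY ⟨x, hx⟩, h]
  exact Subtype.ext (funext fun B => Subtype.ext (by
    rw [hX, hY, tmul_eq_tmul_of_eqOn hXY B.2.1]))

theorem schutzToAut_surjective (A : Fin n → Fin m → Trop) :
    Function.Surjective (schutzToAut A) := by
  rintro ⟨f, hf⟩
  obtain ⟨X, hX⟩ := exists_tvmul_of_mem_AutSet hf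
  have hbij := bijOn_tvmul_of_mem_AutSet hf hX
  let φ : HSet A → HSet A := fun B => ⟨tmul X B.1, tmul_mem_HSet_of_bijOn hbij B.2⟩
  refine ⟨⟨φ, X, fun _ => rfl⟩, Subtype.ext (funext fun x => Subtype.ext ?_)⟩
  rw [schutzToAut_apply _ (X := X) fun _ => rfl, hX]

theorem schutzToAut_comp (A : Fin n → Fin m → Trop) (φ ψ : Schutz A)
    (h : φ.1 ∘ ψ.1 ∈ Schutz A) :
    (schutzToAut A ⟨φ.1 ∘ ψ.1, h⟩).1 = (schutzToAut A φ).1 ∘ (schutzToAut A ψ).1 := by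
  obtain ⟨X, hX⟩ := φ.2
  obtain ⟨Y, hY⟩ := ψ.2
  funext x
  refine Subtype.ext ?_
  rw [schutzToAut_apply _ (X := tmul X Y) fun B => by simp [hX, hY, tmul_assoc],
    Function.comp_apply, schutzToAut_apply φ hX, schutzToAut_apply ψ hY, tvmul_tmul]

end Schutzenberger

/-- The Schützenberger group `Γ_H` of the `H`-class of `A` is isomorphic
to `Aut(C(A))`, via the map sending `φ_X` to the automorphism `x ↦ X ⊗ x` of `C(A)`. -/
theorem stmt_4 {n m : ℕ} (A : Fin n → Fin m → Trop) :
    ∃ Φ : Schutz A → AutSet A,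
      Function.Bijective Φ ∧
      (∀ φ ψ : Schutz A, ∀ h : (φ.1 ∘ ψ.1) ∈ Schutz A,
        (Φ ⟨φ.1 ∘ ψ.1, h⟩).1 = (Φ φ).1 ∘ (Φ ψ).1) ∧
      (∀ φ : Schutz A, ∀ X : Fin n → Fin n → Trop,
        (∀ B : HSet A, (φ.1 B).1 = tmul X B.1) →
        ∀ x : colSpace A, ((Φ φ).1 x).1 = tvmul X x.1) :=
  ⟨schutzToAut A, ⟨schutzToAut_injective A, schutzToAut_surjective A⟩, schutzToAut_comp A,
    fun φ _ hX x => schutzToAut_apply φ hX x⟩
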